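/- For a, b \in \mathbb{N}_0, \zeta_1^{des}(-a) \cdot \zeta_1^{des}(-b) = \sum_{i+j=b} (-1)^i \binom{b}{i} \zeta_2^{des}(-a-i, -j). -/

import Mathlib

/-- The multivariate power series `f(∑_{j ∈ S} t_j)` obtained by substituting the
sum of the variables indexed by `S` into the one-variable power series `f`. -/
noncomputable def substSum {r : ℕ} (f : PowerSeries ℚ) (S : Finset (Fin r)) :
    MvPowerSeries (Fin r) ℚ :=
  fun d => if d.support ⊆ S then
    (d.multinomial : ℚ) * PowerSeries.coeff (R := ℚ) (d.sum fun _ n => n) f else 0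

/-- `Zgen r f = ∏_{i=1}^r f(t_i + ⋯ + t_r)` as a formal power series in `t_1, …, t_r`. -/
noncomputable def Zgen (r : ℕ) (f : PowerSeries ℚ) : MvPowerSeries (Fin r) ℚ :=
  ∏ i : Fin r, substSum f (Finset.Ici i)

/-- View a power series in the variables `t_2, …, t_{r+1}` (i.e. in `r` variables)
as a power series in `t_1, …, t_{r+1}` not involving the first variable. -/
noncomputable def shiftVar {r : ℕ} (f : MvPowerSeries (Fin r) ℚ) :
    MvPowerSeries (Fin (r + 1)) ℚ :=
  fun d => if d 0 = 0 then
    f (Finsupp.comapDomain Fin.succ d (Fin.succ_injective r).injOn) else 0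

/-- The desingularized value `ζ_r^{des}(-k_1, …, -k_r)`: namely `k_1! ⋯ k_r!` times
the coefficient of `(-t_1)^{k_1} ⋯ (-t_r)^{k_r}` in `Zgen r f`. -/
noncomputable def zetaDes (r : ℕ) (f : PowerSeries ℚ) (k : Fin r → ℕ) : ℚ :=
  (∏ i, ((-1 : ℚ) ^ (k i) * (k i).factorial)) *
    MvPowerSeries.coeff (R := ℚ) (Finsupp.equivFunOnFinite.symm k) (Zgen r f)

/-!
Write `u n = n! [tⁿ] F`. The factorials in `ζ^{des}` turn `ζ_2^{des}(-k₁, -k₂)` into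
`(-1)^{k₁+k₂} ∑_{p+q=k₂} C(k₂, p) u_{k₁+p} u_q`, the image of `X^{k₁} (X + Y)^{k₂}` under the
umbral functional `X^i Y^j ↦ u_i u_j`, while `ζ_1^{des}(-a) ζ_1^{des}(-b) = (-1)^{a+b} u_a u_b` is
the image of `X^a Y^b`. The identity is therefore the binomial expansion of
`X^a Y^b = X^a ((X + Y) - X)^b`, the coefficient form of the substitution `t₂ ↦ t₂ - t₁`
in `F(t₁ + t₂) F(t₂)`.
-/

open Finset
open scoped Nat

theorem sum_antidiagonal_neg_one_pow_mul_choose_mul_pow {R : Type*} [CommRing R] (x y : R)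
    (a b : ℕ) :
    ∑ m ∈ antidiagonal b, (-1) ^ m.1 * (b.choose m.1 : R) * (x ^ (a + m.1) * (x + y) ^ m.2) =
      x ^ a * y ^ b := by
  have h := (Commute.all (-x) (x + y)).add_pow' b
  rw [neg_add_cancel_left] at h
  rw [h, mul_sum]
  refine sum_congr rfl fun m _ => ?_
  rw [nsmul_eq_mul, neg_pow, pow_add]
  ring

section Umbral

variable {R : Type*} [CommRing R] (u : ℕ → R)

noncomputable def umbralEval : MvPolynomial (Fin 2) R →ₗ[R] R :=
  (MvPolynomial.basisMonomials (Fin 2) R).constr R fun m => u (m 0) * u (m 1)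

theorem umbralEval_X_pow_mul_X_pow (i j : ℕ) :
    umbralEval u (MvPolynomial.X 0 ^ i * MvPolynomial.X 1 ^ j) = u i * u j := by
  have h := (MvPolynomial.basisMonomials (Fin 2) R).constr_basis R (fun m => u (m 0) * u (m 1))
    (Finsupp.single 0 i + Finsupp.single 1 j)
  rw [MvPolynomial.coe_basisMonomials] at h
  rw [MvPolynomial.X_pow_eq_monomial, MvPolynomial.X_pow_eq_monomial, MvPolynomial.monomial_mul,
    one_mul, umbralEval, h]
  simp

theorem umbralEval_X_pow_mul_add_pow (k₁ k₂ : ℕ) :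
    umbralEval u (MvPolynomial.X 0 ^ k₁ * (MvPolynomial.X 0 + MvPolynomial.X 1) ^ k₂) =
      ∑ p ∈ antidiagonal k₂, (k₂.choose p.1 : R) * (u (k₁ + p.1) * u p.2) := by
  rw [(Commute.all _ _).add_pow', mul_sum, map_sum]
  refine sum_congr rfl fun p _ => ?_
  rw [mul_smul_comm, ← mul_assoc, ← pow_add, map_nsmul, umbralEval_X_pow_mul_X_pow, nsmul_eq_mul]

-- The image under `umbralEval u` of `X₀^a ((X₀ + X₁) - X₀)^b = X₀^a X₁^b`.
theorem sum_antidiagonal_alternating_binomial_convolution (a b : ℕ) :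
    ∑ m ∈ antidiagonal b, (-1) ^ m.1 * (b.choose m.1 : R) *
        ∑ p ∈ antidiagonal m.2, (m.2.choose p.1 : R) * (u (a + m.1 + p.1) * u p.2) =
      u a * u b := by
  rw [← umbralEval_X_pow_mul_X_pow, ← sum_antidiagonal_neg_one_pow_mul_choose_mul_pow, map_sum]
  refine sum_congr rfl fun m _ => ?_
  rw [← umbralEval_X_pow_mul_add_pow, ← smul_eq_mul, ← map_smul, Algebra.smul_def]
  simp

end Umbral

theorem MvPowerSeries.coeff_mul_of_coeff_eq_zero_of_ne_single {σ R : Type*} [CommSemiring R]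
    [DecidableEq σ] {f g : MvPowerSeries σ R} {i : σ}
    (hg : ∀ e : σ →₀ ℕ, e ≠ Finsupp.single i (e i) → coeff e g = 0) (d : σ →₀ ℕ) :
    coeff d (f * g) =
      ∑ p ∈ antidiagonal (d i), coeff (d.update i p.1) f * coeff (Finsupp.single i p.2) g := by
  set emb : ℕ × ℕ → (σ →₀ ℕ) × (σ →₀ ℕ) := fun p => (d.update i p.1, Finsupp.single i p.2)
  have hinj : Set.InjOn emb (antidiagonal (d i)) := by
    intro p hp q hq h
    have h₂ : p.2 = q.2 := Finsupp.single_injective i (congrArg Prod.snd h)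
    rw [mem_coe, HasAntidiagonal.mem_antidiagonal] at hp hq
    exact Prod.ext (by omega) h₂
  rw [coeff_mul, ← sum_image (g := emb) (f := fun q => coeff q.1 f * coeff q.2 g) hinj]
  symm
  apply sum_subset
  · simp only [subset_iff, mem_image, HasAntidiagonal.mem_antidiagonal]
    rintro _ ⟨p, hp, rfl⟩
    ext j
    by_cases hj : j = i
    · subst hj; simp [emb, hp]
    · simp [emb, hj]
  · rintro q hq hq_notMem
    by_contra hne
    have hq₂ : q.2 = Finsupp.single i (q.2 i) := by
      by_contra h
      exact hne (by rw [hg _ h, mul_zero])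
    rw [HasAntidiagonal.mem_antidiagonal] at hq
    refine hq_notMem (mem_image.2
      ⟨(q.1 i, q.2 i), HasAntidiagonal.mem_antidiagonal.2 ?_, Prod.ext ?_ hq₂.symm⟩)
    · rw [← hq]; rfl
    · ext j
      by_cases hj : j = i
      · subst hj; simp [emb]
      · have hqj := DFunLike.congr_fun hq j
        rw [hq₂] at hqj
        simpa [emb, hj] using hqj.symm

theorem substSum_singleton {r : ℕ} (f : PowerSeries ℚ) (i : Fin r) (e : Fin r →₀ ℕ) :
    substSum f {i} e = if e = Finsupp.single i (e i) then PowerSeries.coeff (e i) f else 0 := by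
  simp only [substSum, Finsupp.support_subset_singleton]
  split_ifs with h
  · generalize e i = n at h ⊢
    subst h
    rw [Finsupp.multinomial, Finsupp.prod_single_index Nat.factorial_zero]
    simp [Nat.div_self (Nat.factorial_pos _)]
  · rfl

theorem substSum_univ_fin_two (f : PowerSeries ℚ) (k p : ℕ) :
    substSum f univ (Finsupp.equivFunOnFinite.symm ![k, p]) =
      ((k + p).choose p : ℚ) * PowerSeries.coeff (k + p) f := by
  rw [substSum, if_pos (subset_univ _), Finsupp.multinomial_eq_of_support_subset (subset_univ _)]
  simp [Nat.multinomial_univ_two, Nat.add_choose, Finsupp.sum_fintype]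

theorem coeff_Zgen_two (f : PowerSeries ℚ) (k₁ k₂ : ℕ) :
    MvPowerSeries.coeff (Finsupp.equivFunOnFinite.symm ![k₁, k₂]) (Zgen 2 f) =
      ∑ p ∈ antidiagonal k₂,
        ((k₁ + p.1).choose p.1 : ℚ) * PowerSeries.coeff (k₁ + p.1) f * PowerSeries.coeff p.2 f := by
  have hIci0 : Ici (0 : Fin 2) = univ := by decide
  have hIci1 : Ici (1 : Fin 2) = {1} := by decide
  rw [Zgen, Fin.prod_univ_two, hIci0, hIci1,
    MvPowerSeries.coeff_mul_of_coeff_eq_zero_of_ne_single (i := 1)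
      (fun e he => by rw [MvPowerSeries.coeff_apply, substSum_singleton, if_neg he])]
  refine sum_congr rfl fun p _ => ?_
  have hupdate : (Finsupp.equivFunOnFinite.symm ![k₁, k₂]).update 1 p.1 =
      Finsupp.equivFunOnFinite.symm ![k₁, p.1] := by
    ext j; fin_cases j <;> simp
  rw [hupdate, MvPowerSeries.coeff_apply, MvPowerSeries.coeff_apply, substSum_univ_fin_two,
    substSum_singleton]
  simp

theorem factorial_mul_factorial_mul_add_choose (k p q : ℕ) :
    (k ! * (p + q)! * (k + p).choose p : ℚ) = (p + q).choose p * (k + p)! * q ! := by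
  rw [Nat.cast_add_choose, ← Nat.choose_symm_add, Nat.cast_add_choose]
  field_simp

theorem zetaDes_one (f : PowerSeries ℚ) (k : ℕ) :
    zetaDes 1 f ![k] = (-1) ^ k * (k ! * PowerSeries.coeff k f) := by
  have hIci : Ici (0 : Fin 1) = {0} := by decide
  have hsingle : Finsupp.equivFunOnFinite.symm ![k] = Finsupp.single 0 k :=
    Finsupp.ext fun j => by fin_cases j; simp
  rw [zetaDes, Zgen, Fin.prod_univ_one, Fin.prod_univ_one, hIci, MvPowerSeries.coeff_apply,
    substSum_singleton, hsingle]
  simp [mul_assoc]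

theorem zetaDes_two (f : PowerSeries ℚ) (k₁ k₂ : ℕ) :
    zetaDes 2 f ![k₁, k₂] = (-1) ^ (k₁ + k₂) * ∑ p ∈ antidiagonal k₂, (k₂.choose p.1 : ℚ) *
      ((k₁ + p.1)! * PowerSeries.coeff (k₁ + p.1) f * (p.2 ! * PowerSeries.coeff p.2 f)) := by
  rw [zetaDes, Fin.prod_univ_two, coeff_Zgen_two, mul_sum, mul_sum]
  refine sum_congr rfl fun ⟨p, q⟩ hpq => ?_
  rw [HasAntidiagonal.mem_antidiagonal] at hpq
  subst hpq
  simp only [Matrix.cons_val_zero, Matrix.cons_val_one]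
  linear_combination (-1) ^ (k₁ + (p + q)) * PowerSeries.coeff (k₁ + p) f *
    PowerSeries.coeff q f * factorial_mul_factorial_mul_add_choose k₁ p q

theorem zetaDes_shuffle_one_one_general (F : PowerSeries ℚ) (a b : ℕ) :
    zetaDes 1 F ![a] * zetaDes 1 F ![b] =
      ∑ m ∈ Finset.HasAntidiagonal.antidiagonal b,
        (-1 : ℚ) ^ m.1 * (b.choose m.1 : ℚ) * zetaDes 2 F ![a + m.1, m.2] := by
  rw [zetaDes_one, zetaDes_one, mul_mul_mul_comm, ← pow_add,
    ← sum_antidiagonal_alternating_binomial_convolution (fun n => n ! * PowerSeries.coeff n F),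
    mul_sum]
  refine sum_congr rfl fun ⟨i, j⟩ hij => ?_
  rw [HasAntidiagonal.mem_antidiagonal] at hij
  subst hij
  rw [zetaDes_two, ← add_assoc]
  ring

/-- Depth `(1,1)` shuffle-type product: for `a, b ∈ ℕ₀`,
`ζ_1^{des}(-a) ζ_1^{des}(-b) = ∑_{i+j=b} (-1)^i C(b,i) ζ_2^{des}(-a-i, -j)`. -/
theorem zetaDes_shuffle_one_one (F : PowerSeries ℚ)
    (hF : (PowerSeries.exp ℚ - 1) ^ 2 * F =
      (1 - PowerSeries.X) * PowerSeries.exp ℚ - 1) (a b : ℕ) :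
    zetaDes 1 F ![a] * zetaDes 1 F ![b] =
      ∑ m ∈ Finset.HasAntidiagonal.antidiagonal b,
        (-1 : ℚ) ^ m.1 * (b.choose m.1 : ℚ) * zetaDes 2 F ![a + m.1, m.2] :=
  zetaDes_shuffle_one_one_general F a b
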